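/- arXiv:1202.5374 — 7 statements merged into one kernel-verified Lean document; each statement's English description precedes it below -/
import Mathlib

section
/- If H is a Hadamard matrix of size n (an n×n matrix with entries ±1 satisfying H·Hᵀ = n·I), then n = 1, n = 2, or n is divisible by 4. -/
open Matrix

theorem hadamard_size {n : ℕ} (H : Matrix (Fin n) (Fin n) ℝ)
    (hentries : ∀ i j, H i j = 1 ∨ H i j = -1)
    (hH : H * Hᵀ = (n : ℝ) • 1) :
    n = 1 ∨ n = 2 ∨ 4 ∣ n := by
  classical
  rcases Nat.lt_or_ge n 3 with h3 | h3
  · interval_cases n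
    · right; right; exact dvd_zero 4
    · left; rfl
    · right; left; rfl
  · right; right
    have horth : ∀ i k : Fin n, i ≠ k → ∑ j, H i j * H k j = 0 := by
      intro i k hik
      have h := congrFun (congrFun hH i) k
      simpa [Matrix.mul_apply, Matrix.transpose_apply, Matrix.one_apply, hik] using h
    set i0 : Fin n := ⟨0, by omega⟩ with hi0
    set i1 : Fin n := ⟨1, by omega⟩ with hi1
    set i2 : Fin n := ⟨2, by omega⟩ with hi2
    set f : Fin n → ℝ := fun j => (1 + H i0 j * H i1 j) * (1 + H i0 j * H i2 j) with hf
    have e01 := horth i0 i1 (by simp [hi0, hi1, Fin.ext_iff])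
    have e02 := horth i0 i2 (by simp [hi0, hi2, Fin.ext_iff])
    have e12 := horth i1 i2 (by simp [hi1, hi2, Fin.ext_iff])
    have hsum : ∑ j, f j = (n : ℝ) := by
      have expand : ∀ j, f j = 1 + H i0 j * H i1 j + H i0 j * H i2 j + H i1 j * H i2 j := by
        intro j
        rcases hentries i0 j with h|h <;> rcases hentries i1 j with h'|h' <;>
          rcases hentries i2 j with h''|h'' <;> simp [hf, h, h', h''] <;> ring
      calc ∑ j, f j = ∑ j : Fin n, (1 + H i0 j * H i1 j + H i0 j * H i2 j + H i1 j * H i2 j) :=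
            Finset.sum_congr rfl (fun j _ => expand j)
        _ = (n : ℝ) := by
            rw [Finset.sum_add_distrib, Finset.sum_add_distrib, Finset.sum_add_distrib,
              e01, e02, e12]
            simp
    have hval : ∀ j, f j = 0 ∨ f j = 4 := by
      intro j
      rcases hentries i0 j with h|h <;> rcases hentries i1 j with h'|h' <;>
        rcases hentries i2 j with h''|h'' <;> simp [hf, h, h', h''] <;> norm_num
    have hcount : ∑ j, f j = 4 * ((Finset.univ.filter (fun j => f j = 4)).card : ℝ) := by
      rw [← Finset.sum_filter_add_sum_filter_not Finset.univ (fun j => f j = 4)]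
      have h1 : ∑ j ∈ Finset.univ.filter (fun j => f j = 4), f j
          = 4 * ((Finset.univ.filter (fun j => f j = 4)).card : ℝ) := by
        rw [Finset.sum_congr rfl (fun j hj => (Finset.mem_filter.mp hj).2)]
        simp [mul_comm]
      have h2 : ∑ j ∈ Finset.univ.filter (fun j => ¬ f j = 4), f j = 0 := by
        apply Finset.sum_eq_zero
        intro j hj
        rcases hval j with h | h
        · exact h
        · exact absurd h (Finset.mem_filter.mp hj).2
      rw [h1, h2, add_zero]
    have : (n : ℝ) = 4 * ((Finset.univ.filter (fun j => f j = 4)).card : ℝ) := by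
      rw [← hsum, hcount]
    have hn : n = 4 * (Finset.univ.filter (fun j => f j = 4)).card := by
      exact_mod_cast this
    exact ⟨_, hn⟩
end

section
/- For a tournament of even size n ≥ 4 with score vector s, the inequality sᵀs ≥ n(n² - 2n + 2)/4 holds, with equality if and only if the tournament is almost regular (the scores consist of n/2 copies of n/2 and n/2 copies of (n-2)/2). -/
open Matrix Polynomial

noncomputable section

def IsTournament {n : ℕ} (A : Matrix (Fin n) (Fin n) ℝ) : Prop :=
  (∀ i j, A i j = 0 ∨ A i j = 1) ∧ (∀ i, A i i = 0) ∧
    A + Aᵀ = (Matrix.of fun _ _ => (1:ℝ)) - 1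

def Seidel {n : ℕ} (A : Matrix (Fin n) (Fin n) ℝ) : Matrix (Fin n) (Fin n) ℂ :=
  Complex.I • ((A - Aᵀ).map Complex.ofReal)

theorem score_square_sum_bound {n : ℕ} (hn : Even n) (hn4 : 4 ≤ n)
    (A : Matrix (Fin n) (Fin n) ℝ) (hA : IsTournament A) :
    (n : ℝ) * ((n : ℝ) ^ 2 - 2 * n + 2) / 4 ≤ ∑ i, (A.mulVec (fun _ => 1) i) ^ 2 ∧
    (∑ i, (A.mulVec (fun _ => 1) i) ^ 2 = (n : ℝ) * ((n : ℝ) ^ 2 - 2 * n + 2) / 4 ↔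
      ((Finset.univ.filter fun i => A.mulVec (fun _ => 1) i = (n : ℝ) / 2).card = n / 2 ∧
       (Finset.univ.filter fun i => A.mulVec (fun _ => 1) i = ((n : ℝ) - 2) / 2).card = n / 2)) := by
  classical
  obtain ⟨h01, hdiag, hsum⟩ := hA
  set s : Fin n → ℝ := A.mulVec (fun _ => 1) with hs
  have hs_def : ∀ i, s i = ∑ j, A i j := by
    intro i
    simp [hs, Matrix.mulVec, dotProduct]
  have hint : ∀ i, ∃ m : ℤ, s i = (m : ℝ) := by
    intro i
    refine ⟨∑ j, if A i j = 1 then 1 else 0, ?_⟩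
    rw [hs_def]
    push_cast
    refine Finset.sum_congr rfl fun j _ => ?_
    rcases h01 i j with h | h <;> norm_num [h]
  have hentry : ∀ i j, A i j + A j i = 1 - if i = j then (1:ℝ) else 0 := by
    intro i j
    have h := congrFun (congrFun hsum i) j
    simpa [Matrix.one_apply] using h
  obtain ⟨k, hk⟩ := hn
  have hcomm : ∑ i : Fin n, ∑ j : Fin n, A j i = ∑ i : Fin n, ∑ j : Fin n, A i j :=
    Finset.sum_comm
  have hsumS : ∑ i, s i = (n:ℝ) * ((n:ℝ) - 1) / 2 := by
    have h1 : ∑ i : Fin n, ∑ j : Fin n, (A i j + A j i)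
        = ∑ i : Fin n, ∑ j : Fin n, (1 - if i = j then (1:ℝ) else 0) :=
      Finset.sum_congr rfl fun i _ => Finset.sum_congr rfl fun j _ => hentry i j
    have h2 : ∑ i : Fin n, ∑ j : Fin n, (1 - if i = j then (1:ℝ) else 0)
        = (n:ℝ)^2 - n := by
      simp [Finset.sum_sub_distrib, Finset.card_univ]
      ring
    have h3 : ∑ i : Fin n, ∑ j : Fin n, (A i j + A j i) = 2 * ∑ i, s i := by
      have he : ∀ i, ∑ j : Fin n, (A i j + A j i) = s i + ∑ j : Fin n, A j i := by
        intro i; rw [Finset.sum_add_distrib, hs_def]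
      rw [Finset.sum_congr rfl fun i _ => he i, Finset.sum_add_distrib, hcomm]
      have : ∑ i : Fin n, ∑ j : Fin n, A i j = ∑ i, s i :=
        Finset.sum_congr rfl fun i _ => (hs_def i).symm
      rw [this]; ring
    have := h1.trans h2
    rw [h3] at this
    linarith
  set c : ℝ := ((n:ℝ) - 1) / 2 with hc
  have hT : ∑ i, (s i - c)^2 = ∑ i, (s i)^2 - (n:ℝ) * c^2 := by
    have he : ∀ i, (s i - c)^2 = (s i)^2 - 2*c*(s i) + c^2 := fun i => by ring
    rw [Finset.sum_congr rfl fun i _ => he i, Finset.sum_add_distrib,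
      Finset.sum_sub_distrib, ← Finset.mul_sum, hsumS]
    simp [Finset.card_univ]
    ring
  have hq : ∀ i, (1:ℝ)/4 ≤ (s i - c)^2 := by
    intro i
    obtain ⟨m, hm⟩ := hint i
    have hz : (2*m - (n:ℤ) + 1) ≠ 0 := by omega
    have h1 : (1:ℤ) ≤ (2*m - (n:ℤ) + 1)^2 := by
      rcases hz.lt_or_gt with h | h <;> nlinarith
    have h1' : (1:ℝ) ≤ ((2*m - (n:ℤ) + 1 : ℤ) : ℝ)^2 := by exact_mod_cast h1
    have he : s i - c = ((2*m - (n:ℤ) + 1 : ℤ) : ℝ)/2 := by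
      rw [hm, hc]; push_cast; ring
    rw [he]; nlinarith [h1']
  have hTn : (n:ℝ)/4 ≤ ∑ i, (s i - c)^2 := by
    have := Finset.sum_le_sum (fun i (_ : i ∈ Finset.univ) => hq i)
    simpa [Finset.card_univ, mul_comm, div_eq_mul_inv] using this
  have hkey : (n:ℝ)/4 + (n:ℝ)*c^2 = (n:ℝ)*((n:ℝ)^2 - 2*n + 2)/4 := by
    rw [hc]; ring
  refine ⟨by linarith, ?_⟩
  set F1 := Finset.univ.filter fun i => s i = (n:ℝ)/2 with hF1
  set F2 := Finset.univ.filter fun i => s i = ((n:ℝ)-2)/2 with hF2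
  have hdisj : Disjoint F1 F2 := by
    rw [Finset.disjoint_left]
    intro i h1 h2
    rw [hF1, Finset.mem_filter] at h1
    rw [hF2, Finset.mem_filter] at h2
    have := h1.2.symm.trans h2.2
    linarith
  constructor
  · intro heq
    have hT4 : ∑ i, (s i - c)^2 = (n:ℝ)/4 := by rw [hT, heq]; linarith
    have hall : ∀ i ∈ Finset.univ, (s i - c)^2 - 1/4 = 0 := by
      refine (Finset.sum_eq_zero_iff_of_nonneg fun i _ => by linarith [hq i]).mp ?_
      rw [Finset.sum_sub_distrib, hT4]
      simp [Finset.card_univ]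
      ring
    have hmem : ∀ i, i ∈ F1 ∪ F2 := by
      intro i
      have h0 := hall i (Finset.mem_univ i)
      have hmul : (s i - c - 1/2) * (s i - c + 1/2) = 0 := by nlinarith
      rcases mul_eq_zero.mp hmul with h | h
      · refine Finset.mem_union_left _ ?_
        rw [hF1, Finset.mem_filter]
        refine ⟨Finset.mem_univ i, ?_⟩
        rw [hc] at h; linarith
      · refine Finset.mem_union_right _ ?_
        rw [hF2, Finset.mem_filter]
        refine ⟨Finset.mem_univ i, ?_⟩
        rw [hc] at h; linarith
    have huniv : F1 ∪ F2 = Finset.univ := Finset.eq_univ_iff_forall.mpr hmem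
    have hcard : F1.card + F2.card = n := by
      rw [← Finset.card_union_of_disjoint hdisj, huniv, Finset.card_univ, Fintype.card_fin]
    have e1 : ∑ i ∈ F1, s i = (F1.card : ℝ) * ((n:ℝ)/2) := by
      rw [Finset.sum_congr rfl fun i hi => (Finset.mem_filter.mp hi).2,
        Finset.sum_const, nsmul_eq_mul]
    have e2 : ∑ i ∈ F2, s i = (F2.card : ℝ) * (((n:ℝ)-2)/2) := by
      rw [Finset.sum_congr rfl fun i hi => (Finset.mem_filter.mp hi).2,
        Finset.sum_const, nsmul_eq_mul]
    have hsplit : (F1.card : ℝ) * ((n:ℝ)/2) + (F2.card : ℝ) * (((n:ℝ)-2)/2)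
        = (n:ℝ)*((n:ℝ)-1)/2 := by
      have h := hsumS
      rw [← huniv, Finset.sum_union hdisj, e1, e2] at h
      exact h
    have hcR : (F1.card : ℝ) + (F2.card : ℝ) = (n:ℝ) := by exact_mod_cast hcard
    have hb : 2 * F2.card = n := by
      have : (2 * F2.card : ℝ) = (n:ℝ) := by linear_combination (n:ℝ)*hcR - 2*hsplit
      exact_mod_cast this
    constructor <;> omega
  · rintro ⟨h1, h2⟩
    have huniv : F1 ∪ F2 = Finset.univ := by
      apply Finset.eq_univ_of_card
      rw [Finset.card_union_of_disjoint hdisj, h1, h2, Fintype.card_fin]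
      omega
    have hhalf : ((n/2 : ℕ) : ℝ) = (n:ℝ)/2 := by
      have h2k : n / 2 = k := by omega
      rw [h2k, hk]; push_cast; ring
    have e1 : ∑ i ∈ F1, (s i)^2 = (F1.card : ℝ) * ((n:ℝ)/2)^2 := by
      rw [Finset.sum_congr rfl fun i hi => by
        rw [(Finset.mem_filter.mp hi).2], Finset.sum_const, nsmul_eq_mul]
    have e2 : ∑ i ∈ F2, (s i)^2 = (F2.card : ℝ) * (((n:ℝ)-2)/2)^2 := by
      rw [Finset.sum_congr rfl fun i hi => by
        rw [(Finset.mem_filter.mp hi).2], Finset.sum_const, nsmul_eq_mul]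
    calc ∑ i, (s i)^2 = ∑ i ∈ F1 ∪ F2, (s i)^2 := by rw [huniv]
      _ = ∑ i ∈ F1, (s i)^2 + ∑ i ∈ F2, (s i)^2 := Finset.sum_union hdisj
      _ = (n:ℝ)*((n:ℝ)^2 - 2*n + 2)/4 := by
          rw [e1, e2, h1, h2, hhalf]
          have h4 : (4:ℝ) ≤ (n:ℝ) := by exact_mod_cast hn4
          field_simp
          ring
end
end

section
/- A tournament of even size n ≥ 4 is almost regular if and only if its Seidel matrix S satisfies 𝟏ᵀ S² 𝟏 = n, equivalently ‖S·𝟏‖² = n. -/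
open Matrix Polynomial

noncomputable section

theorem almost_regular_iff_seidel {n : ℕ} (hn : Even n) (hn4 : 4 ≤ n)
    (A : Matrix (Fin n) (Fin n) ℝ) (hA : IsTournament A) :
    ((Finset.univ.filter fun i => A.mulVec (fun _ => 1) i = (n : ℝ) / 2).card = n / 2 ∧
     (Finset.univ.filter fun i => A.mulVec (fun _ => 1) i = ((n : ℝ) - 2) / 2).card = n / 2) ↔
    ∑ i, ∑ j, ((Seidel A) ^ 2) i j = (n : ℂ) := by
  obtain ⟨h01, hdiag, hsum⟩ := hA
  obtain ⟨t, ht⟩ := hn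
  set a : Fin n → Fin n → ℝ := fun i j => A i j - A j i with hadef
  have ha : ∀ i j, a i j = - a j i := fun i j => by simp only [hadef]; ring
  set m : Fin n → ℕ := fun i => (Finset.univ.filter fun j => A i j = 1).card with hmdef
  have hsumA : ∀ i, ∑ j, A i j = (m i : ℝ) := by
    intro i
    rw [hmdef]
    rw [← Finset.sum_boole]
    refine Finset.sum_congr rfl fun j _ => ?_
    rcases h01 i j with h | h <;> simp [h]
  have hmul : ∀ i, A.mulVec (fun _ => 1) i = (m i : ℝ) := by
    intro i; rw [← hsumA]; simp [Matrix.mulVec, dotProduct]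
  have hpair : ∀ i j, A i j + A j i = if i = j then (0:ℝ) else 1 := by
    intro i j
    have h := congrFun (congrFun hsum i) j
    simp only [Matrix.add_apply, Matrix.transpose_apply, Matrix.sub_apply, Matrix.of_apply,
      Matrix.one_apply] at h
    rw [h]; split <;> norm_num
  have hrow : ∀ k, ∑ j, a k j = 2 * (m k : ℝ) - ((n:ℝ) - 1) := by
    intro k
    have h1 : ∑ j, (A k j + A j k) = (n:ℝ) - 1 := by
      rw [Finset.sum_congr rfl fun j _ => hpair k j]
      have h2 : ∀ j, (if k = j then (0:ℝ) else 1) = 1 - (if k = j then 1 else 0) := by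
        intro j; split <;> norm_num
      simp_rw [h2, Finset.sum_sub_distrib, Finset.sum_const, Finset.sum_ite_eq,
        Finset.mem_univ, if_true, Finset.card_univ, Fintype.card_fin]
      simp
    have h2 : ∑ j, a k j = ∑ j, (2 * A k j - (A k j + A j k)) := by
      refine Finset.sum_congr rfl fun j _ => ?_
      simp only [hadef]; ring
    rw [h2, Finset.sum_sub_distrib, h1, ← Finset.mul_sum, hsumA]
  set z : Fin n → ℤ := fun k => 2 * (m k : ℤ) - ((n:ℤ) - 1) with hzdef
  have hzr : ∀ k, ((z k : ℝ)) = ∑ j, a k j := by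
    intro k; rw [hrow]; simp only [hzdef]; push_cast; ring
  have hzodd : ∀ k, Odd (z k) := by
    intro k
    refine ⟨(m k : ℤ) - t, ?_⟩
    simp only [hzdef, ht]; push_cast; ring
  have hz1 : ∀ k, 1 ≤ (z k)^2 := by
    intro k
    have h0 : z k ≠ 0 := by
      intro h
      have ho := hzodd k
      rw [h] at ho
      exact ((Int.not_odd_iff_even.mpr Even.zero)) ho
    have habs := Int.one_le_abs h0
    nlinarith [sq_abs (z k)]
  -- key: complex sum equals sum of squares of row sums
  have hkey : ∑ i, ∑ j, ((Seidel A) ^ 2) i j = ((∑ k, ((z k:ℝ))^2 : ℝ) : ℂ) := by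
    have hS : ∀ i j, ((Seidel A) ^ 2) i j = -(((∑ k, a i k * a k j : ℝ)) : ℂ) := by
      intro i j
      rw [pow_two, Matrix.mul_apply]
      have h3 : ∀ k : Fin n, Seidel A i k * Seidel A k j
          = -((((a i k * a k j : ℝ)) : ℂ)) := by
        intro k
        simp only [Seidel, Matrix.smul_apply, Matrix.map_apply, Matrix.sub_apply,
          Matrix.transpose_apply, smul_eq_mul]
        rw [mul_mul_mul_comm, Complex.I_mul_I]
        simp only [hadef]
        push_cast
        ring
      rw [Finset.sum_congr rfl fun k _ => h3 k]
      push_cast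
      simp
    have hreal : ∑ k, ((z k:ℝ))^2 = -∑ i, ∑ j, ∑ k, a i k * a k j := by
      have c1 : ∑ i, ∑ j, ∑ k, a i k * a k j = ∑ k, (∑ i, a i k) * (∑ j, a k j) := by
        calc ∑ i, ∑ j, ∑ k, a i k * a k j
            = ∑ i, ∑ k, ∑ j, a i k * a k j :=
              Finset.sum_congr rfl fun _ _ => Finset.sum_comm
          _ = ∑ i, ∑ k, a i k * ∑ j, a k j := by simp_rw [Finset.mul_sum]
          _ = ∑ k, ∑ i, a i k * ∑ j, a k j := Finset.sum_comm
          _ = ∑ k, (∑ i, a i k) * (∑ j, a k j) := by simp_rw [Finset.sum_mul]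
      rw [c1, ← Finset.sum_neg_distrib]
      refine Finset.sum_congr rfl fun k _ => ?_
      have h4 : ∑ i, a i k = -∑ j, a k j := by
        rw [← Finset.sum_neg_distrib]
        exact Finset.sum_congr rfl fun i _ => ha i k
      rw [h4, hzr k]; ring
    simp_rw [hS]
    rw [hreal]
    push_cast
    simp [Finset.sum_neg_distrib]
  have hc2 : ((∑ k, ((z k:ℝ))^2 : ℝ) : ℂ) = ((∑ k, (z k)^2 : ℤ) : ℂ) := by push_cast; rfl
  have hiff : (∑ i, ∑ j, ((Seidel A) ^ 2) i j = (n : ℂ)) ↔ ∑ k, (z k)^2 = (n:ℤ) := by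
    rw [hkey, hc2]
    constructor
    · intro h; exact_mod_cast h
    · intro h; exact_mod_cast h
  -- filter identifications
  have hf1 : (Finset.univ.filter fun i => A.mulVec (fun _ => 1) i = (n : ℝ) / 2)
      = Finset.univ.filter fun i => z i = 1 := by
    ext i
    simp only [Finset.mem_filter, Finset.mem_univ, true_and]
    rw [hmul i]
    constructor
    · intro h
      have h2 : (2:ℤ) * (m i) = n := by
        exact_mod_cast (by linarith : 2 * ((m i : ℝ)) = (n:ℝ))
      simp only [hzdef]; omega
    · intro h
      simp only [hzdef] at h
      have h2 : (2:ℤ) * m i = n := by omega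
      have h3 : (2:ℝ) * m i = n := by exact_mod_cast h2
      linarith
  have hf2 : (Finset.univ.filter fun i => A.mulVec (fun _ => 1) i = ((n : ℝ) - 2) / 2)
      = Finset.univ.filter fun i => z i = -1 := by
    ext i
    simp only [Finset.mem_filter, Finset.mem_univ, true_and]
    rw [hmul i]
    constructor
    · intro h
      have h2 : (2:ℤ) * (m i) = n - 2 := by
        exact_mod_cast (by linarith : 2 * ((m i : ℝ)) = (n:ℝ) - 2)
      simp only [hzdef]; omega
    · intro h
      simp only [hzdef] at h
      have h2 : (2:ℤ) * m i = n - 2 := by omega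
      have h3 : (2:ℝ) * m i = (n:ℝ) - 2 := by
        have hn2 : (2:ℤ) ≤ (n:ℤ) := by omega
        exact_mod_cast h2
      linarith
  set P := Finset.univ.filter fun i => z i = 1 with hPdef
  set Q := Finset.univ.filter fun i => z i = -1 with hQdef
  have hdisj : Disjoint P Q := by
    rw [Finset.disjoint_left]
    intro i hiP hiQ
    rw [hPdef, Finset.mem_filter] at hiP
    rw [hQdef, Finset.mem_filter] at hiQ
    omega
  have hsz : ∑ k, z k = 0 := by
    have hr : ∑ k, ((z k:ℝ)) = 0 := by
      simp_rw [hzr]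
      simp only [hadef, Finset.sum_sub_distrib]
      rw [sub_eq_zero]
      exact Finset.sum_comm
    exact_mod_cast hr
  have hsumP : ∑ k ∈ P, (z k)^2 = (P.card : ℤ) := by
    have e : ∑ k ∈ P, (z k)^2 = ∑ _k ∈ P, (1:ℤ) := by
      refine Finset.sum_congr rfl fun k hk => ?_
      rw [hPdef, Finset.mem_filter] at hk
      rw [hk.2]; norm_num
    rw [e]; simp
  have hsumQ : ∑ k ∈ Q, (z k)^2 = (Q.card : ℤ) := by
    have e : ∑ k ∈ Q, (z k)^2 = ∑ _k ∈ Q, (1:ℤ) := by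
      refine Finset.sum_congr rfl fun k hk => ?_
      rw [hQdef, Finset.mem_filter] at hk
      rw [hk.2]; norm_num
    rw [e]; simp
  rw [hiff, hf1, hf2]
  constructor
  · rintro ⟨h1, h2⟩
    have hcard : (P ∪ Q).card = n := by
      rw [Finset.card_union_of_disjoint hdisj, h1, h2]; omega
    have huniv : P ∪ Q = Finset.univ := by
      apply Finset.eq_univ_of_card
      rw [hcard, Fintype.card_fin]
    calc ∑ k, (z k)^2 = ∑ k ∈ P ∪ Q, (z k)^2 := by rw [huniv]
      _ = ∑ k ∈ P, (z k)^2 + ∑ k ∈ Q, (z k)^2 := Finset.sum_union hdisj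
      _ = (P.card : ℤ) + (Q.card : ℤ) := by rw [hsumP, hsumQ]
      _ = (n:ℤ) := by rw [h1, h2]; push_cast; omega
  · intro hsq
    have hzero : ∑ k, ((z k)^2 - 1) = 0 := by
      rw [Finset.sum_sub_distrib, hsq]
      simp
    have heach : ∀ k, (z k)^2 = 1 := by
      intro k
      have h5 := (Finset.sum_eq_zero_iff_of_nonneg
        (fun k _ => by have := hz1 k; omega)).mp hzero k (Finset.mem_univ k)
      omega
    have hmem : ∀ k, k ∈ P ∪ Q := by
      intro k
      have h6 : (z k - 1) * (z k + 1) = 0 := by linear_combination heach k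
      rcases mul_eq_zero.mp h6 with h7 | h7
      · exact Finset.mem_union_left _ (by rw [hPdef, Finset.mem_filter]; exact ⟨Finset.mem_univ k, by omega⟩)
      · exact Finset.mem_union_right _ (by rw [hQdef, Finset.mem_filter]; exact ⟨Finset.mem_univ k, by omega⟩)
    have huniv : P ∪ Q = Finset.univ := Finset.eq_univ_iff_forall.mpr hmem
    have hcards : P.card + Q.card = n := by
      rw [← Finset.card_union_of_disjoint hdisj, huniv, Finset.card_univ, Fintype.card_fin]
    have hbal : (P.card : ℤ) = (Q.card : ℤ) := by
      have h8 : ∑ k ∈ P ∪ Q, z k = 0 := by rw [huniv]; exact hsz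
      rw [Finset.sum_union hdisj] at h8
      have h9 : ∑ k ∈ P, z k = (P.card : ℤ) := by
        have e : ∑ k ∈ P, z k = ∑ _k ∈ P, (1:ℤ) := by
          refine Finset.sum_congr rfl fun k hk => ?_
          rw [hPdef, Finset.mem_filter] at hk; exact hk.2
        rw [e]; simp
      have h10 : ∑ k ∈ Q, z k = -(Q.card : ℤ) := by
        have e : ∑ k ∈ Q, z k = ∑ _k ∈ Q, (-1:ℤ) := by
          refine Finset.sum_congr rfl fun k hk => ?_
          rw [hQdef, Finset.mem_filter] at hk; exact hk.2
        rw [e]; simp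
      rw [h9, h10] at h8
      omega
    have hPQ : P.card = Q.card := by exact_mod_cast hbal
    constructor <;> omega
end
end

section
/- Let M be an n×n normal complex matrix with spectral decomposition M = Σᵢ τᵢ Pᵢ, where the τᵢ are the distinct eigenvalues and Pᵢ the orthogonal projections onto the eigenspaces. Then for any complex number c and any x not an eigenvalue of M, the characteristic polynomial satisfies det(M + cJ - xI) = det(M - xI) · (1 + c Σᵢ (𝟏ᵀ Pᵢ 𝟏)/(τᵢ - x)), where J is the all-ones matrix. -/
open Matrix

/-
Writing `A = M - xI = Σᵢ (τᵢ - x) Pᵢ`, orthogonality of the `Pᵢ` shows that `B = Σᵢ (τᵢ - x)⁻¹ Pᵢ`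
is an inverse of `A`. Since `cJ = (c𝟏)𝟏ᵀ` has rank one, `A + cJ = A (I + (B c𝟏) 𝟏ᵀ)`, and the
matrix determinant lemma gives the factor `1 + c 𝟏ᵀ B 𝟏 = 1 + c Σᵢ 𝟏ᵀ Pᵢ 𝟏 / (τᵢ - x)`.
-/

namespace Matrix

section OrthogonalIdempotents

variable {ι m R : Type*} [Fintype ι] [DecidableEq ι] [Fintype m]

theorem sum_smul_mul_sum_smul_of_orthogonal [CommSemiring R] {P : ι → Matrix m m R}
    (horth : ∀ i j, P i * P j = if i = j then P i else 0) (a b : ι → R) :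
    (∑ i, a i • P i) * (∑ i, b i • P i) = ∑ i, (a i * b i) • P i := by
  simp only [Finset.sum_mul_sum, Matrix.smul_mul, Matrix.mul_smul, horth, smul_smul,
    smul_ite, smul_zero, Finset.sum_ite_eq, Finset.mem_univ, if_true]
  exact Finset.sum_congr rfl fun i _ => by rw [mul_comm]

theorem sum_smul_mul_sum_inv_smul_of_orthogonal [DecidableEq m] [Field R] {P : ι → Matrix m m R}
    (hsum : ∑ i, P i = 1) (horth : ∀ i j, P i * P j = if i = j then P i else 0)
    {a : ι → R} (ha : ∀ i, a i ≠ 0) :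
    (∑ i, a i • P i) * (∑ i, (a i)⁻¹ • P i) = 1 := by
  simp only [sum_smul_mul_sum_smul_of_orthogonal horth, mul_inv_cancel₀ (ha _), one_smul, hsum]

end OrthogonalIdempotents

theorem sum_smul_sub_smul_one {ι m R : Type*} [Fintype ι] [Fintype m] [DecidableEq m] [Ring R]
    {P : ι → Matrix m m R} (hsum : ∑ i, P i = 1) (τ : ι → R) (x : R) :
    ∑ i, τ i • P i - x • 1 = ∑ i, (τ i - x) • P i := by
  simp only [sub_smul, Finset.sum_sub_distrib, ← Finset.smul_sum, hsum]

theorem det_add_vecMulVec_of_mul_eq_one {m R : Type*} [Fintype m] [DecidableEq m] [CommRing R]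
    {A B : Matrix m m R} (hAB : A * B = 1) (u v : m → R) :
    (A + vecMulVec u v).det = A.det * (1 + v ⬝ᵥ (B *ᵥ u)) := by
  have hfactor : A + vecMulVec u v = A * (1 + vecMulVec (B *ᵥ u) v) := by
    rw [Matrix.mul_add, Matrix.mul_one, mul_vecMulVec, mulVec_mulVec, hAB, one_mulVec]
  rw [hfactor, det_mul, vecMulVec_eq Unit, det_one_add_replicateCol_mul_replicateRow]

theorem one_dotProduct_mulVec_const {m R : Type*} [Fintype m] [CommSemiring R]
    (B : Matrix m m R) (c : R) :
    (fun _ => 1 : m → R) ⬝ᵥ (B *ᵥ fun _ => c) = c * ∑ a, ∑ b, B a b := by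
  simp only [dotProduct, mulVec, mul_one, mul_comm, Finset.mul_sum]

theorem sum_entries_sum_smul {ι m R : Type*} [Fintype ι] [Fintype m] [CommSemiring R]
    (w : ι → R) (P : ι → Matrix m m R) :
    ∑ a, ∑ b, (∑ i, w i • P i) a b = ∑ i, w i * ∑ a, ∑ b, P i a b := by
  simp only [sum_apply, smul_apply, smul_eq_mul, Finset.mul_sum]
  exact (Finset.sum_congr rfl fun _ _ => Finset.sum_comm).trans Finset.sum_comm

end Matrix

theorem charpoly_rank_one_update_general {n s : ℕ} (M : Matrix (Fin n) (Fin n) ℂ)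
    (τ : Fin s → ℂ) (P : Fin s → Matrix (Fin n) (Fin n) ℂ)
    (hdecomp : M = ∑ i, τ i • P i)
    (hsum : ∑ i, P i = 1)
    (horth : ∀ i j, P i * P j = if i = j then P i else 0)
    (c x : ℂ) (hx : ∀ i, τ i ≠ x) :
    (M + c • Matrix.of (fun _ _ => (1 : ℂ)) - x • 1).det =
      (M - x • 1).det * (1 + c * ∑ i, (∑ a, ∑ b, P i a b) / (τ i - x)) := by
  have hshift : M - x • 1 = ∑ i, (τ i - x) • P i := by
    rw [hdecomp, sum_smul_sub_smul_one hsum]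
  have hinv : (M - x • 1) * ∑ i, (τ i - x)⁻¹ • P i = 1 := by
    rw [hshift]
    exact sum_smul_mul_sum_inv_smul_of_orthogonal hsum horth fun i => sub_ne_zero.mpr (hx i)
  have hJ : c • Matrix.of (fun _ _ => (1 : ℂ)) =
      vecMulVec (fun _ : Fin n => c) (fun _ : Fin n => 1) := by
    ext; simp [vecMulVec_apply]
  rw [add_sub_right_comm, hJ, det_add_vecMulVec_of_mul_eq_one hinv, one_dotProduct_mulVec_const,
    sum_entries_sum_smul]
  simp only [div_eq_inv_mul]

theorem charpoly_rank_one_update {n s : ℕ} (M : Matrix (Fin n) (Fin n) ℂ)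
    (τ : Fin s → ℂ) (P : Fin s → Matrix (Fin n) (Fin n) ℂ)
    (hdecomp : M = ∑ i, τ i • P i)
    (hherm : ∀ i, (P i)ᴴ = P i)
    (hsum : ∑ i, P i = 1)
    (horth : ∀ i j, P i * P j = if i = j then P i else 0)
    (hdist : Function.Injective τ)
    (c x : ℂ) (hx : ∀ i, τ i ≠ x) :
    (M + c • Matrix.of (fun _ _ => (1 : ℂ)) - x • 1).det =
      (M - x • 1).det * (1 + c * ∑ i, (∑ a, ∑ b, P i a b) / (τ i - x)) :=
  charpoly_rank_one_update_general M τ P hdecomp hsum horth c x hx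
end

section
/- Let G be a regular tournament of size n with normal adjacency matrix A whose characteristic polynomial is P_A(x) = -(x - (n-1)/2)(x² + x + (n+1)/4)^{(n-1)/2} (i.e., G is doubly regular). Then the characteristic polynomial of the Seidel matrix S = i(A - Aᵀ) is P_S(x) = -x(x² - n)^{(n-1)/2}; in particular S has eigenvalues √n, 0, -√n with multiplicities (n-1)/2, 1, (n-1)/2. -/
/-!
Put `c = (n - 1) / 2`, `d = (n + 1) / 4`, `k = (n - 1) / 2` and let `J` be the all-ones
matrix. Cayley–Hamilton turns the characteristic polynomial into `(A - c) B ^ k = 0` for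
`B = A² + A + d`, hence `B ^ (k + 1) = (c² + c + d) B ^ k = n d B ^ k`. As `Aᵀ = J - 1 - A` and
`A` is regular, `B` is symmetric, and a real symmetric matrix has no nilpotent part, so
`B² = n d B`. Then `B - d J` is symmetric, satisfies the same equation and has trace zero, so it
vanishes: `A Aᵀ = d + (c - d) J`, i.e. `A` is doubly regular, and `S² = n - J`. Finally `Sᵀ = -S`
gives `P_S(x)² = P_S(x) P_{-S}(x) = P_{S²}(x²) = x² (x² - n) ^ (2 k)`, and a monic square root of
this is unique.
-/

open Matrix Polynomial

noncomputable section

def IsDoublyRegular {n : ℕ} (A : Matrix (Fin n) (Fin n) ℝ) : Prop :=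
  A.mulVec (fun _ => 1) = (fun _ => ((n : ℝ) - 1) / 2) ∧
  A * Aᵀ = (((n : ℝ) + 1) / 4) • 1 + (((n : ℝ) - 3) / 4) • Matrix.of fun _ _ => 1

namespace Matrix

section CommRing

variable {ι R : Type*} [Fintype ι] [CommRing R]

theorem of_one_mul_of_one :
    (of fun _ _ => 1 : Matrix ι ι R) * of (fun _ _ => 1) =
      (Fintype.card ι : R) • of fun _ _ => 1 := by
  ext; simp [mul_apply]

theorem mul_of_one_eq_smul {A : Matrix ι ι R} {r : R} (h : A *ᵥ (fun _ => 1) = fun _ => r) :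
    A * of (fun _ _ => 1) = r • of fun _ _ => 1 := by
  ext i j
  simpa [mul_apply, mulVec, dotProduct] using congrFun h i

theorem IsSymm.mul_of_commute {B D : Matrix ι ι R} (hB : B.IsSymm) (hD : D.IsSymm)
    (hBD : Commute B D) : (B * D).IsSymm := by
  rw [IsSymm, transpose_mul, hB.eq, hD.eq, hBD.eq]

variable [DecidableEq ι]

theorem charpoly_mul_charpoly_neg (M : Matrix ι ι R) :
    M.charpoly * (-M).charpoly = (M * M).charpoly.comp (X ^ 2) := by
  have hX : (compRingHom (X ^ 2)).mapMatrix (scalar ι (X : R[X])) = scalar ι X * scalar ι X := by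
    simp [sq]
  have hC : (compRingHom (X ^ 2)).mapMatrix (C.mapMatrix M) = C.mapMatrix M := by
    ext; simp
  rw [charpoly, charpoly, charpoly, ← det_mul, ← coe_compRingHom_apply, RingHom.map_det]
  simp only [charmatrix, map_neg, map_mul, map_sub, hX, hC]
  rw [sub_neg_eq_add, sub_mul, mul_add, mul_add,
    (scalar_commute X (Commute.all X) (C.mapMatrix M)).eq]
  congr 1
  abel

theorem charpoly_mul_self_of_transpose_eq_neg {S : Matrix ι ι R} (hS : Sᵀ = -S) :
    S.charpoly * S.charpoly = (S * S).charpoly.comp (X ^ 2) := by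
  nth_rw 2 [← charpoly_transpose S]
  rw [hS, charpoly_mul_charpoly_neg]

theorem charpoly_smul_one_sub_of_one (r : R) :
    (r • 1 - of fun _ _ => 1 : Matrix ι ι R).charpoly =
      (X - C r) ^ Fintype.card ι +
        C (Fintype.card ι : R) * (X - C r) ^ (Fintype.card ι - 1) := by
  have hvec : (r • 1 - of fun _ _ => 1 : Matrix ι ι R) =
      vecMulVec (fun _ => -1) (fun _ => 1) - scalar ι (-r) := by
    ext i j
    by_cases hij : i = j <;> simp [vecMulVec_apply, hij, sub_eq_add_neg, add_comm]
  rw [hvec, charpoly_sub_scalar, charpoly_vecMulVec]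
  simp [smul_eq_C_mul, sub_eq_add_neg, dotProduct]

theorem card_eq_of_charpoly_eq [Nontrivial R] {A : Matrix ι ι R} {c d : R} {k : ℕ}
    (hchar : A.charpoly = (X - C c) * (X ^ 2 + X + C d) ^ k) : Fintype.card ι = 2 * k + 1 := by
  have hquad : (X ^ 2 + X + C d).Monic := by monicity!
  have hquad_deg : (X ^ 2 + X + C d).natDegree = 2 := by compute_degree!
  rw [← charpoly_natDegree_eq_dim A, hchar, (monic_X_sub_C c).natDegree_mul (hquad.pow k),
    hquad.natDegree_pow, natDegree_X_sub_C, hquad_deg]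
  ring

theorem pow_succ_eq_smul_pow_of_charpoly_eq {A : Matrix ι ι R} {c d : R} {k : ℕ}
    (hchar : A.charpoly = (X - C c) * (X ^ 2 + X + C d) ^ k) :
    (A * A + A + d • 1) ^ (k + 1) = (c ^ 2 + c + d) • (A * A + A + d • 1) ^ k := by
  have hCH : (A - c • 1) * (A * A + A + d • 1) ^ k = 0 := by
    simpa [hchar, sq, Algebra.algebraMap_eq_smul_one] using aeval_self_charpoly A
  have hA : A * (A * A + A + d • 1) ^ k = c • (A * A + A + d • 1) ^ k := by
    rwa [sub_mul, smul_mul, one_mul, sub_eq_zero] at hCH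
  rw [pow_succ', add_mul, add_mul, mul_assoc, hA, Matrix.mul_smul, hA, Matrix.smul_mul, one_mul,
    smul_smul]
  module

end CommRing

section Real

variable {ι : Type*} [Fintype ι]

theorem IsSymm.eq_zero_of_trace_mul_self_eq_zero {N : Matrix ι ι ℝ} (hN : N.IsSymm)
    (h : (N * N).trace = 0) : N = 0 := by
  rwa [← trace_conjTranspose_mul_self_eq_zero_iff, conjTranspose_eq_transpose_of_trivial, hN.eq]

theorem IsSymm.eq_of_mul_eq_smul {B P : Matrix ι ι ℝ} (hB : B.IsSymm) (hP : P.IsSymm) {e : ℝ}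
    (hBB : B * B = e • B) (hPP : P * P = e • P) (hBP : B * P = e • P) (hPB : P * B = e • P)
    (htr : B.trace = P.trace) : B = P := by
  have hQ : (B - P) * (B - P) = e • (B - P) := by
    rw [sub_mul, mul_sub, mul_sub, hBB, hPP, hBP, hPB, smul_sub]; abel
  refine sub_eq_zero.mp ((hB.sub hP).eq_zero_of_trace_mul_self_eq_zero ?_)
  rw [hQ, trace_smul, trace_sub, htr, sub_self, smul_zero]

variable [DecidableEq ι]

theorem IsSymm.mul_eq_zero_of_pow_mul_eq_zero {B D : Matrix ι ι ℝ} (hB : B.IsSymm)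
    (hD : D.IsSymm) (hBD : Commute B D) {m : ℕ} (h : B ^ (m + 1) * D = 0) : B * D = 0 := by
  induction m with
  | zero => simpa using h
  | succ m ih =>
    refine ih ((hB.pow _).mul_of_commute hD (hBD.pow_left _)
      |>.eq_zero_of_trace_mul_self_eq_zero ?_)
    have hsq : B ^ (m + 1) * D * (B ^ (m + 1) * D) = B ^ m * (B ^ (m + 1 + 1) * D) * D := by
      rw [mul_assoc, ← mul_assoc D, ← (hBD.pow_left _).eq]
      simp only [← mul_assoc, ← pow_add]
      rw [show m + 1 + (m + 1) = m + (m + 1 + 1) by omega]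
    rw [hsq, h, mul_zero, zero_mul, trace_zero]

theorem IsSymm.mul_self_eq_smul_of_pow_succ_eq_smul_pow {B : Matrix ι ι ℝ} (hB : B.IsSymm)
    {e : ℝ} {k : ℕ} (h : B ^ (k + 1) = e • B ^ k) : B * B = e • B := by
  have hD : (B - e • 1).IsSymm := hB.sub (isSymm_one.smul e)
  have hBD : Commute B (B - e • 1) :=
    (Commute.refl B).sub_right ((Commute.one_right B).smul_right e)
  have hBD0 := hB.mul_eq_zero_of_pow_mul_eq_zero hD hBD (m := k) (by
    rw [mul_sub, Matrix.mul_smul, mul_one, ← pow_succ, pow_succ' B (k + 1), h, Matrix.mul_smul,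
      ← pow_succ', h, sub_self])
  rwa [mul_sub, Matrix.mul_smul, mul_one, sub_eq_zero] at hBD0

end Real

end Matrix

namespace Polynomial

variable {R : Type*} [CommRing R] [IsDomain R]

theorem Monic.eq_of_mul_self_eq [NeZero (2 : R)] {p q : R[X]} (hp : p.Monic) (hq : q.Monic)
    (h : p * p = q * q) : p = q := by
  refine (mul_self_eq_mul_self_iff.mp h).resolve_right fun hpq => two_ne_zero (α := R) ?_
  have hlead := hp.leadingCoeff
  rw [hpq, leadingCoeff_neg, hq.leadingCoeff] at hlead
  linear_combination -hlead

theorem roots_X_mul_X_sq_sub_C_sq_pow (s : R) (k : ℕ) :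
    (X * (X ^ 2 - C (s ^ 2)) ^ k).roots = 0 ::ₘ k • {s, -s} := by
  have hfac : X ^ 2 - C (s ^ 2) = (X - C s) * (X - C (-s)) := by
    simp only [map_pow, map_neg]; ring
  have hne : (X - C s) * (X - C (-s)) ≠ 0 := ((monic_X_sub_C s).mul (monic_X_sub_C (-s))).ne_zero
  rw [hfac, roots_mul (mul_ne_zero X_ne_zero (pow_ne_zero _ hne)), roots_X, roots_pow,
    roots_mul hne, roots_X_sub_C, roots_X_sub_C]
  rfl

theorem rootMultiplicity_X_mul_X_sq_sub_C_sq_pow [NeZero (2 : R)] {s : R} (hs : s ≠ 0) (k : ℕ) :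
    (X * (X ^ 2 - C (s ^ 2)) ^ k).rootMultiplicity s = k ∧
      (X * (X ^ 2 - C (s ^ 2)) ^ k).rootMultiplicity 0 = 1 ∧
      (X * (X ^ 2 - C (s ^ 2)) ^ k).rootMultiplicity (-s) = k := by
  classical
  have hs' : s ≠ -s := fun h => hs <|
    (mul_eq_zero.mp (by linear_combination h : (2 : R) * s = 0)).resolve_left two_ne_zero
  simp only [← count_roots, roots_X_mul_X_sq_sub_C_sq_pow]
  simp [hs, hs', hs'.symm, eq_comm (a := (0 : R))]

end Polynomial

theorem Matrix.charpoly_eq_of_transpose_eq_neg_of_mul_self_eq {ι R : Type*} [Fintype ι]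
    [DecidableEq ι] [CommRing R] [IsDomain R] [NeZero (2 : R)] {S : Matrix ι ι R} {k : ℕ}
    (hS : Sᵀ = -S) (hSS : S * S = (Fintype.card ι : R) • 1 - of fun _ _ => 1)
    (hcard : Fintype.card ι = 2 * k + 1) :
    S.charpoly = X * (X ^ 2 - C (Fintype.card ι : R)) ^ k := by
  refine (charpoly_monic S).eq_of_mul_self_eq
    (monic_X.mul ((monic_X_pow_sub_C _ two_ne_zero).pow k)) ?_
  rw [charpoly_mul_self_of_transpose_eq_neg hS, hSS, charpoly_smul_one_sub_of_one]
  simp only [add_comp, mul_comp, pow_comp, sub_comp, X_comp, C_comp]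
  rw [show Fintype.card ι - 1 = 2 * k by omega,
    show (X ^ 2 - C (Fintype.card ι : R)) ^ Fintype.card ι =
      (X ^ 2 - C (Fintype.card ι : R)) ^ (2 * k + 1) by rw [← hcard]]
  ring

theorem seidel_transpose {n : ℕ} (A : Matrix (Fin n) (Fin n) ℝ) : (Seidel A)ᵀ = -Seidel A := by
  ext i j; simp [Seidel]; ring

namespace IsTournament

variable {n : ℕ} {A : Matrix (Fin n) (Fin n) ℝ}

theorem transpose_eq (hA : IsTournament A) : Aᵀ = of (fun _ _ => 1) - 1 - A := by
  rw [← hA.2.2]; abel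

theorem trace_eq_zero (hA : IsTournament A) : A.trace = 0 := by
  simp [trace, hA.2.1]

theorem trace_mul_self_eq_zero (hA : IsTournament A) : (A * A).trace = 0 := by
  simp only [trace, diag, mul_apply]
  refine Finset.sum_eq_zero fun i _ => Finset.sum_eq_zero fun j _ => ?_
  have hji : A j i = 1 - (if i = j then 1 else 0) - A i j := by
    rw [eq_sub_iff_add_eq, add_comm]
    simpa [one_apply] using congrFun₂ hA.2.2 i j
  rcases eq_or_ne i j with rfl | hij
  · simp [hA.2.1]
  · rcases hA.1 i j with h | h <;> simp [hji, hij, h]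

theorem of_one_mul_eq_smul (hA : IsTournament A)
    (hreg : A *ᵥ (fun _ => 1) = fun _ => ((n : ℝ) - 1) / 2) :
    of (fun _ _ => 1) * A = (((n : ℝ) - 1) / 2) • of fun _ _ => 1 := by
  set J : Matrix (Fin n) (Fin n) ℝ := of fun _ _ => 1
  have hJAt : J * Aᵀ = (((n : ℝ) - 1) / 2) • J := by
    rw [← transpose_transpose (J * Aᵀ), transpose_mul, transpose_transpose,
      show Jᵀ = J from rfl, mul_of_one_eq_smul hreg, transpose_smul]
    rfl
  have hA' : A = J - 1 - Aᵀ := by rw [← hA.2.2]; abel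
  rw [hA', mul_sub, mul_sub, hJAt, of_one_mul_of_one, mul_one, Fintype.card_fin]
  match_scalars; ring

theorem isSymm_mul_self_add_self (hA : IsTournament A)
    (hreg : A *ᵥ (fun _ => 1) = fun _ => ((n : ℝ) - 1) / 2) :
    (A * A + A).IsSymm := by
  set J : Matrix (Fin n) (Fin n) ℝ := of fun _ _ => 1
  have hexp : (J - 1 - A) * (J - 1 - A) + (J - 1 - A) =
      J * J - J * A - A * J - J + (A * A + A) := by
    noncomm_ring
  rw [IsSymm, transpose_add, transpose_mul, hA.transpose_eq, hexp, of_one_mul_of_one,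
    hA.of_one_mul_eq_smul hreg, mul_of_one_eq_smul hreg, Fintype.card_fin]
  match_scalars <;> ring

theorem mul_self_add_self_add_smul_eq (hA : IsTournament A)
    (hreg : A *ᵥ (fun _ => 1) = fun _ => ((n : ℝ) - 1) / 2)
    {k : ℕ} (hchar : A.charpoly = (X - C (((n : ℝ) - 1) / 2)) *
      (X ^ 2 + X + C (((n : ℝ) + 1) / 4)) ^ k) :
    A * A + A + (((n : ℝ) + 1) / 4) • 1 = (((n : ℝ) + 1) / 4) • of fun _ _ => 1 := by
  set J : Matrix (Fin n) (Fin n) ℝ := of fun _ _ => 1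
  set d : ℝ := ((n : ℝ) + 1) / 4
  set B := A * A + A + d • 1
  have hAJ : A * J = (((n : ℝ) - 1) / 2) • J := mul_of_one_eq_smul hreg
  have hJA : J * A = (((n : ℝ) - 1) / 2) • J := hA.of_one_mul_eq_smul hreg
  have hJJ : J * J = (n : ℝ) • J := by
    rw [of_one_mul_of_one, Fintype.card_fin]
  have hB : B.IsSymm := (hA.isSymm_mul_self_add_self hreg).add (isSymm_one.smul d)
  have hBk : B ^ (k + 1) = ((n : ℝ) * d) • B ^ k := by
    rw [pow_succ_eq_smul_pow_of_charpoly_eq hchar]; congr 1; ring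
  have hBJ : B * J = ((n : ℝ) * d) • J := by
    simp only [B, add_mul, mul_assoc, hAJ, Matrix.mul_smul, Matrix.smul_mul, one_mul]
    match_scalars; ring
  have hJB : J * B = ((n : ℝ) * d) • J := by
    simp only [B, mul_add, ← mul_assoc, hJA, Matrix.mul_smul, Matrix.smul_mul, mul_one]
    match_scalars; ring
  refine hB.eq_of_mul_eq_smul ((IsSymm.ext fun _ _ => rfl).smul d)
    (hB.mul_self_eq_smul_of_pow_succ_eq_smul_pow hBk) ?_ ?_ ?_ ?_
  · rw [Matrix.smul_mul, Matrix.mul_smul, hJJ, smul_smul, smul_smul, smul_smul]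
    congr 1
    ring
  · rw [Matrix.mul_smul, hBJ, smul_comm]
  · rw [Matrix.smul_mul, hJB, smul_comm]
  · simp only [B, trace_add, trace_smul, hA.trace_mul_self_eq_zero, hA.trace_eq_zero]
    simp [J, trace, mul_comm]

theorem isDoublyRegular_of_charpoly (hA : IsTournament A)
    (hreg : A *ᵥ (fun _ => 1) = fun _ => ((n : ℝ) - 1) / 2)
    {k : ℕ} (hchar : A.charpoly = (X - C (((n : ℝ) - 1) / 2)) *
      (X ^ 2 + X + C (((n : ℝ) + 1) / 4)) ^ k) :
    IsDoublyRegular A := by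
  refine ⟨hreg, ?_⟩
  rw [hA.transpose_eq, mul_sub, mul_sub, mul_of_one_eq_smul hreg, mul_one, sub_sub, add_comm A,
    eq_sub_of_add_eq (hA.mul_self_add_self_add_smul_eq hreg hchar)]
  match_scalars <;> ring

theorem seidel_mul_self (hA : IsTournament A) (hD : IsDoublyRegular A) :
    Seidel A * Seidel A = (n : ℂ) • 1 - of fun _ _ => 1 := by
  set J : Matrix (Fin n) (Fin n) ℝ := of fun _ _ => 1
  have hAJ : A * J = (((n : ℝ) - 1) / 2) • J := mul_of_one_eq_smul hD.1
  have hJA : J * A = (((n : ℝ) - 1) / 2) • J := hA.of_one_mul_eq_smul hD.1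
  have hJJ : J * J = (n : ℝ) • J := by rw [of_one_mul_of_one, Fintype.card_fin]
  have hAA : A * A = A * J - A - A * Aᵀ := by rw [hA.transpose_eq]; noncomm_ring
  have hM : (A - Aᵀ) * (A - Aᵀ) = J - (n : ℝ) • 1 := by
    have hexp : (A - Aᵀ) * (A - Aᵀ) = (4 : ℝ) • (A * A) + (4 : ℝ) • A + 1 - (2 : ℝ) • (A * J) -
        (2 : ℝ) • (J * A) - (2 : ℝ) • J + J * J := by
      rw [hA.transpose_eq]
      simp only [sub_mul, mul_sub, one_mul, mul_one]
      module
    rw [hexp, hAA, hD.2, hAJ, hJA, hJJ]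
    match_scalars <;> ring
  have hSeidel : Seidel A = Complex.I • (A - Aᵀ).map Complex.ofRealHom := rfl
  rw [hSeidel, Matrix.smul_mul, Matrix.mul_smul, smul_smul, Complex.I_mul_I, ← Matrix.map_mul, hM]
  ext i j
  by_cases hij : i = j <;> simp [J, one_apply, hij]

end IsTournament

theorem seidel_charpoly_of_doubly_regular_general {n : ℕ}
    (A : Matrix (Fin n) (Fin n) ℝ) (hA : IsTournament A)
    (hreg : A.mulVec (fun _ => 1) = (fun _ => ((n : ℝ) - 1) / 2))
    (hchar : A.charpoly = (X - C (((n : ℝ) - 1) / 2)) *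
        (X ^ 2 + X + C (((n : ℝ) + 1) / 4)) ^ ((n - 1) / 2)) :
    (Seidel A).charpoly = X * (X ^ 2 - C (n : ℂ)) ^ ((n - 1) / 2) ∧
    (Seidel A).charpoly.rootMultiplicity (Real.sqrt n : ℂ) = (n - 1) / 2 ∧
    (Seidel A).charpoly.rootMultiplicity 0 = 1 ∧
    (Seidel A).charpoly.rootMultiplicity (-(Real.sqrt n : ℂ)) = (n - 1) / 2 := by
  set k := (n - 1) / 2
  have hn : n = 2 * k + 1 := by simpa using card_eq_of_charpoly_eq hchar
  set s : ℂ := (Real.sqrt n : ℂ)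
  have hs : s ^ 2 = n := by
    rw [← Complex.ofReal_pow, Real.sq_sqrt n.cast_nonneg, Complex.ofReal_natCast]
  have hS : (Seidel A).charpoly = X * (X ^ 2 - C (n : ℂ)) ^ k := by
    simpa using charpoly_eq_of_transpose_eq_neg_of_mul_self_eq (seidel_transpose A)
      (by simpa using hA.seidel_mul_self (hA.isDoublyRegular_of_charpoly hreg hchar))
      (by simpa using hn)
  rw [← hs] at hS ⊢
  exact ⟨hS, hS ▸ rootMultiplicity_X_mul_X_sq_sub_C_sq_pow (by simp [s]; omega) k⟩

theorem seidel_charpoly_of_doubly_regular {n : ℕ} (hmod : n % 4 = 3)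
    (A : Matrix (Fin n) (Fin n) ℝ) (hA : IsTournament A)
    (hreg : A.mulVec (fun _ => 1) = (fun _ => ((n : ℝ) - 1) / 2))
    (hnormal : A * Aᵀ = Aᵀ * A)
    (hchar : A.charpoly = (X - C (((n : ℝ) - 1) / 2)) *
        (X ^ 2 + X + C (((n : ℝ) + 1) / 4)) ^ ((n - 1) / 2)) :
    (Seidel A).charpoly = X * (X ^ 2 - C (n : ℂ)) ^ ((n - 1) / 2) ∧
    (Seidel A).charpoly.rootMultiplicity (Real.sqrt n : ℂ) = (n - 1) / 2 ∧
    (Seidel A).charpoly.rootMultiplicity 0 = 1 ∧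
    (Seidel A).charpoly.rootMultiplicity (-(Real.sqrt n : ℂ)) = (n - 1) / 2 :=
  seidel_charpoly_of_doubly_regular_general A hA hreg hchar
end
end

section
/- Let G be a doubly regular tournament of size n = 4k+3 and let G₁ be the tournament of size n-1 obtained by deleting one vertex. Then the Seidel matrix S₁ of G₁ has eigenvalues √n, 1, -1, -√n with multiplicities (n-3)/2, 1, 1, (n-3)/2 respectively. -/
/-!
Write `M = A - Aᵀ`. From `A + Aᵀ = J - I` and double regularity, `M 𝟏 = 0` and `M Mᵀ = n I - J`.
Deleting the vertex `x` leaves `M₁ M₁ᵀ = n I - (J + w wᵀ)`, where `w` is the `x`-th column of `M`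
without its `x`-th entry. The `x`-th diagonal entry of `M Mᵀ` and the `x`-th entry of `M 𝟏` give
`w ⬝ w = n - 1` and `𝟏 ⬝ w = 0`, so `P = J + w wᵀ` satisfies `P² = (n - 1) P` and
`tr P = 2 (n - 1)`. The Seidel matrix `S₁ = i M₁` is Hermitian with `S₁² = M₁ M₁ᵀ = n I - P`, hence
`(S₁² - 1)(S₁² - n) = 0`: every eigenvalue `λ` has `λ² ∈ {1, n}`, and `tr S₁² = (n - 1)(n - 2)`
forces `λ² = 1` exactly twice. Finally `S₁ᵀ = -S₁`, so `S₁` and `-S₁` have the same characteristic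
polynomial and `λ`, `-λ` have equal multiplicities.
-/

open Matrix Polynomial

noncomputable section

open Finset

theorem Polynomial.rootMultiplicity_prod_X_sub_C {R ι : Type*} [CommRing R] [IsDomain R]
    [DecidableEq R] [Fintype ι] (f : ι → R) (a : R) :
    (∏ i, (X - C (f i))).rootMultiplicity a = #{i | f i = a} := by
  rw [← count_roots, roots_prod _ _ (prod_ne_zero_iff.mpr fun i _ => X_sub_C_ne_zero (f i))]
  simp [Multiset.count_map, Finset.card, filter_val, eq_comm]

theorem Matrix.submatrix_succAbove_mul {R : Type*} [Semiring R] {m : ℕ}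
    (M N : Matrix (Fin (m + 1)) (Fin (m + 1)) R) (x : Fin (m + 1)) :
    (M * N).submatrix x.succAbove x.succAbove =
      M.submatrix x.succAbove x.succAbove * N.submatrix x.succAbove x.succAbove +
        vecMulVec (fun i => M (x.succAbove i) x) (fun j => N x (x.succAbove j)) := by
  ext i j
  simp [mul_apply, Fin.sum_univ_succAbove _ x, vecMulVec_apply, add_comm]

theorem Matrix.vecMulVec_add_vecMulVec_mul_self {ι R : Type*} [Fintype ι] [CommRing R]
    {u v : ι → R} {c : R} (hu : u ⬝ᵥ u = c) (hv : v ⬝ᵥ v = c) (huv : u ⬝ᵥ v = 0) :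
    (vecMulVec u u + vecMulVec v v) * (vecMulVec u u + vecMulVec v v) =
      c • (vecMulVec u u + vecMulVec v v) := by
  simp [add_mul, mul_add, vecMulVec_mul_vecMulVec, hu, hv, huv, dotProduct_comm v u,
    vecMulVec_smul]

lemma card_filter_mul_sub_eq_sum_sub {ι : Type*} [Fintype ι] {e : ι → ℝ} {s t : ℝ}
    (h : ∀ i, e i = s ∨ e i = t) : (#{i | e i = t} : ℝ) * (t - s) = ∑ i, (e i - s) := by
  have : ∀ i, e i - s = if e i = t then t - s else 0 := fun i => by
    rcases h i with hi | hi <;> split_ifs <;> simp_all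
  simp only [this, sum_ite, sum_const, nsmul_eq_mul, mul_zero, add_zero]

lemma card_filter_sq_eq_sq {ι : Type*} [Fintype ι] (e : ι → ℝ) {s : ℝ} (hs : s ≠ 0) :
    #{i | e i ^ 2 = s ^ 2} = #{i | e i = s} + #{i | e i = -s} := by
  classical
  rw [← card_union_of_disjoint, ← filter_or]
  · simp only [sq_eq_sq_iff_eq_or_eq_neg]
  · exact disjoint_filter.mpr fun i _ h1 h2 => hs (by linarith)

namespace Matrix.IsHermitian
variable {𝕜 n : Type*} [RCLike 𝕜] [Fintype n] [DecidableEq n] {A : Matrix n n 𝕜}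
  (hA : A.IsHermitian)
include hA

lemma rootMultiplicity_charpoly_cfc (f : ℝ → ℝ) (μ : ℝ) :
    (cfc f A).charpoly.rootMultiplicity (μ : 𝕜) = #{i | f (hA.eigenvalues i) = μ} := by
  classical
  simp [hA.charpoly_cfc_eq, rootMultiplicity_prod_X_sub_C]

lemma rootMultiplicity_charpoly (μ : ℝ) :
    A.charpoly.rootMultiplicity (μ : 𝕜) = #{i | hA.eigenvalues i = μ} := by
  simpa [cfc_id' ℝ A] using hA.rootMultiplicity_charpoly_cfc (fun x => x) μ

lemma card_eigenvalues_eq_neg (hskew : Aᵀ = -A) (μ : ℝ) :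
    #{i | hA.eigenvalues i = -μ} = #{i | hA.eigenvalues i = μ} := by
  have hneg := hA.rootMultiplicity_charpoly_cfc (fun x => -x) μ
  rw [cfc_neg_id (a := A), ← hskew, charpoly_transpose, hA.rootMultiplicity_charpoly] at hneg
  simpa [neg_eq_iff_eq_neg] using hneg.symm

lemma trace_cfc (f : ℝ → ℝ) : (cfc f A).trace = ∑ i, (f (hA.eigenvalues i) : 𝕜) := by
  rw [hA.cfc_eq, IsHermitian.cfc, Unitary.conjStarAlgAut_apply, trace_mul_cycle,
    Unitary.coe_star_mul_self, one_mul, trace_diagonal]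
  rfl

lemma eval_eigenvalues_eq_zero {p : ℝ[X]} (hp : aeval A p = 0) (i : n) :
    p.eval (hA.eigenvalues i) = 0 := by
  have : Nonempty n := ⟨i⟩
  simpa [hp, spectrum.zero_eq] using
    spectrum.subset_polynomial_aeval A p ⟨_, hA.eigenvalues_mem_spectrum_real i, rfl⟩

lemma card_eigenvalues_sq_eq {m : ℕ} (hcard : Fintype.card n = m) (hm : 0 < m)
    (hann : (A * A - 1) * (A * A - ((m : ℝ) + 1) • 1) = 0)
    (htr : (A * A).trace = m * (m - 1)) :
    #{i | hA.eigenvalues i ^ 2 = 1} = 2 ∧ #{i | hA.eigenvalues i ^ 2 = (m : ℝ) + 1} + 2 = m := by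
  have hroot (i : n) : hA.eigenvalues i ^ 2 = 1 ∨ hA.eigenvalues i ^ 2 = m + 1 := by
    have := hA.eval_eigenvalues_eq_zero (p := (X ^ 2 - 1) * (X ^ 2 - C ((m : ℝ) + 1)))
      (by simpa only [map_mul, map_sub, map_pow, aeval_X, map_one, aeval_C,
        Algebra.algebraMap_eq_smul_one, sq] using hann) i
    simpa [sub_eq_zero] using this
  have hsum : ∑ i, hA.eigenvalues i ^ 2 = m * (m - 1) := by
    have := hA.trace_cfc (· ^ 2)
    rw [cfc_pow_id (a := A), sq, htr] at this
    exact_mod_cast this.symm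
  have h1 := card_filter_mul_sub_eq_sum_sub (fun i => (hroot i).symm)
  have hc := card_filter_mul_sub_eq_sum_sub hroot
  simp only [sum_sub_distrib, hsum, sum_const, card_univ, hcard, nsmul_eq_mul] at h1 hc
  have hm' : (m : ℝ) ≠ 0 := by positivity
  have h1' : (#{i | hA.eigenvalues i ^ 2 = 1} : ℝ) = 2 :=
    mul_right_cancel₀ hm' (by linear_combination -h1)
  have hc' : (#{i | hA.eigenvalues i ^ 2 = (m : ℝ) + 1} : ℝ) + 2 = m :=
    mul_right_cancel₀ hm' (by linear_combination hc)
  exact ⟨by exact_mod_cast h1', by exact_mod_cast hc'⟩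

lemma rootMultiplicity_charpoly_of_transpose_eq_neg {m : ℕ} (hcard : Fintype.card n = m)
    (hm : 0 < m) (hskew : Aᵀ = -A) (hann : (A * A - 1) * (A * A - ((m : ℝ) + 1) • 1) = 0)
    (htr : (A * A).trace = m * (m - 1)) :
    2 * A.charpoly.rootMultiplicity (√((m : ℝ) + 1) : 𝕜) + 2 = m ∧
      A.charpoly.rootMultiplicity 1 = 1 ∧ A.charpoly.rootMultiplicity (-1) = 1 ∧
      A.charpoly.rootMultiplicity (-(√((m : ℝ) + 1) : 𝕜)) =
        A.charpoly.rootMultiplicity (√((m : ℝ) + 1) : 𝕜) := by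
  obtain ⟨h1, hc⟩ := hA.card_eigenvalues_sq_eq hcard hm hann htr
  have hs : √((m : ℝ) + 1) ≠ 0 := by positivity
  rw [← one_pow 2, card_filter_sq_eq_sq _ one_ne_zero] at h1
  rw [← Real.sq_sqrt (by positivity : (0 : ℝ) ≤ m + 1), card_filter_sq_eq_sq _ hs] at hc
  rw [show (-1 : 𝕜) = ((-1 : ℝ) : 𝕜) by simp, show (1 : 𝕜) = ((1 : ℝ) : 𝕜) by simp,
    show -(√((m : ℝ) + 1) : 𝕜) = ((-√((m : ℝ) + 1) : ℝ) : 𝕜) by simp]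
  simp only [hA.rootMultiplicity_charpoly, hA.card_eigenvalues_eq_neg hskew] at h1 hc ⊢
  refine ⟨?_, ?_, ?_, trivial⟩ <;> omega

end Matrix.IsHermitian

theorem Matrix.apply_eq_neg_of_transpose_eq_neg {n R : Type*} [Neg R] {M : Matrix n n R}
    (h : Mᵀ = -M) (i j : n) : M j i = -M i j :=
  congrFun (congrFun h i) j

section Deletion
variable {m : ℕ} {M : Matrix (Fin (m + 1)) (Fin (m + 1)) ℝ} (x : Fin (m + 1))

lemma submatrix_succAbove_mul_transpose
    (hMM : M * Mᵀ = ((m : ℝ) + 1) • 1 - of (fun _ _ => 1)) :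
    M.submatrix x.succAbove x.succAbove * (M.submatrix x.succAbove x.succAbove)ᵀ =
      ((m : ℝ) + 1) • 1 - (vecMulVec 1 1 + vecMulVec (fun i => M (x.succAbove i) x)
        (fun i => M (x.succAbove i) x)) := by
  have h := M.submatrix_succAbove_mul Mᵀ x
  have hrhs : (((m : ℝ) + 1) • (1 : Matrix (Fin (m + 1)) (Fin (m + 1)) ℝ) -
      of (fun _ _ => 1)).submatrix x.succAbove x.succAbove =
        ((m : ℝ) + 1) • (1 : Matrix (Fin m) (Fin m) ℝ) - vecMulVec 1 1 := by
    ext i j; simp [one_apply]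
  rw [hMM, ← transpose_submatrix, hrhs] at h
  rw [← sub_sub, h]
  exact (add_sub_cancel_right _ _).symm

variable (hskew : Mᵀ = -M)
include hskew

lemma dotProduct_self_succAbove_col (hMM : M * Mᵀ = ((m : ℝ) + 1) • 1 - of (fun _ _ => 1)) :
    (fun i => M (x.succAbove i) x) ⬝ᵥ (fun i => M (x.succAbove i) x) = m := by
  have hxx : M x x = 0 := by linarith [apply_eq_neg_of_transpose_eq_neg hskew x x]
  calc (fun i => M (x.succAbove i) x) ⬝ᵥ (fun i => M (x.succAbove i) x)
      = ∑ i, M x (x.succAbove i) * M x (x.succAbove i) := by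
        simp [dotProduct, apply_eq_neg_of_transpose_eq_neg hskew x]
    _ = (M * Mᵀ) x x := by simp [mul_apply, Fin.sum_univ_succAbove _ x, hxx]
    _ = m := by simp [hMM]

lemma one_dotProduct_succAbove_col (hrow : M *ᵥ (fun _ => 1) = 0) :
    1 ⬝ᵥ (fun i => M (x.succAbove i) x) = 0 := by
  have hxx : M x x = 0 := by linarith [apply_eq_neg_of_transpose_eq_neg hskew x x]
  calc 1 ⬝ᵥ (fun i => M (x.succAbove i) x) = -∑ i, M x (x.succAbove i) := by
        simp [dotProduct, apply_eq_neg_of_transpose_eq_neg hskew x]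
    _ = -(M *ᵥ (fun _ => 1)) x := by simp [mulVec, dotProduct, Fin.sum_univ_succAbove _ x, hxx]
    _ = 0 := by simp [hrow]

variable (hMM : M * Mᵀ = ((m : ℝ) + 1) • 1 - of (fun _ _ => 1))
include hMM

lemma trace_submatrix_succAbove_gram :
    (M.submatrix x.succAbove x.succAbove * (M.submatrix x.succAbove x.succAbove)ᵀ).trace =
      m * (m - 1) := by
  rw [submatrix_succAbove_mul_transpose x hMM]
  have hone : (1 : Fin m → ℝ) ⬝ᵥ 1 = m := by simp [dotProduct]
  simp only [trace_sub, trace_add, trace_smul, trace_one, trace_vecMulVec, hone,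
    dotProduct_self_succAbove_col x hskew hMM, Fintype.card_fin, smul_eq_mul]
  ring

lemma submatrix_succAbove_gram_quadratic (hrow : M *ᵥ (fun _ => 1) = 0) :
    (M.submatrix x.succAbove x.succAbove * (M.submatrix x.succAbove x.succAbove)ᵀ - 1) *
      (M.submatrix x.succAbove x.succAbove * (M.submatrix x.succAbove x.succAbove)ᵀ -
        ((m : ℝ) + 1) • 1) = 0 := by
  rw [submatrix_succAbove_mul_transpose x hMM]
  set P := vecMulVec (1 : Fin m → ℝ) 1 + vecMulVec (fun i => M (x.succAbove i) x)
    (fun i => M (x.succAbove i) x)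
  have hP : P * P = (m : ℝ) • P := vecMulVec_add_vecMulVec_mul_self (by simp [dotProduct])
    (dotProduct_self_succAbove_col x hskew hMM) (one_dotProduct_succAbove_col x hskew hrow)
  rw [show ((m : ℝ) + 1) • 1 - P - 1 = (m : ℝ) • 1 - P by module,
    show ((m : ℝ) + 1) • 1 - P - ((m : ℝ) + 1) • 1 = -P by module]
  simp [sub_mul, hP]

end Deletion

section Seidel
variable {n : ℕ} (A : Matrix (Fin n) (Fin n) ℝ)

lemma transpose_seidel : (Seidel A)ᵀ = -Seidel A := by
  ext i j
  simp only [Seidel, transpose_apply, Matrix.smul_apply, map_apply, Matrix.sub_apply,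
    Complex.ofReal_sub, smul_eq_mul, Matrix.neg_apply]
  ring

lemma isHermitian_seidel : (Seidel A).IsHermitian := by
  ext i j
  simp only [Seidel, conjTranspose_apply, Matrix.smul_apply, map_apply, Matrix.sub_apply,
    transpose_apply, Complex.ofReal_sub, smul_eq_mul, star_mul', RCLike.star_def, Complex.conj_I,
    star_sub, Complex.conj_ofReal]
  ring

lemma seidel_mul_seidel :
    Seidel A * Seidel A = ((A - Aᵀ) * (A - Aᵀ)ᵀ).map Complex.ofReal := by
  ext i j
  simp only [Seidel, mul_apply, Matrix.smul_apply, map_apply, transpose_apply, Matrix.sub_apply,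
    smul_eq_mul, Complex.ofReal_sum, Complex.ofReal_mul, Complex.ofReal_sub]
  refine sum_congr rfl fun l _ => ?_
  linear_combination (↑(A i l) - ↑(A l i)) * (↑(A l j) - ↑(A j l)) * Complex.I_mul_I

lemma seidel_mul_seidel_quadratic {c : ℝ}
    (h : ((A - Aᵀ) * (A - Aᵀ)ᵀ - 1) * ((A - Aᵀ) * (A - Aᵀ)ᵀ - c • 1) = 0) :
    (Seidel A * Seidel A - 1) * (Seidel A * Seidel A - c • 1) = 0 := by
  have h' := congrArg (Algebra.ofId ℝ ℂ).mapMatrix h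
  rw [map_mul, map_sub, map_sub, map_smul, map_one, map_zero] at h'
  rwa [seidel_mul_seidel]

lemma trace_seidel_mul_seidel :
    (Seidel A * Seidel A).trace = (((A - Aᵀ) * (A - Aᵀ)ᵀ).trace : ℂ) := by
  rw [seidel_mul_seidel]
  exact (AddMonoidHom.map_trace Complex.ofRealHom _).symm

end Seidel

namespace IsDoublyRegular
variable {n : ℕ} {A : Matrix (Fin n) (Fin n) ℝ}

lemma sub_transpose_mulVec_one (hsum : A + Aᵀ = of (fun _ _ => 1) - 1)
    (hdr : IsDoublyRegular A) : (A - Aᵀ) *ᵥ (fun _ => 1) = 0 := by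
  have hM : A - Aᵀ = (2 : ℝ) • A - (of (fun _ _ => 1) - 1) := by
    rw [← hsum]; module
  have hJ : (of (fun _ _ => 1) - 1 : Matrix (Fin n) (Fin n) ℝ) *ᵥ (fun _ => 1)
      = fun _ => (n : ℝ) - 1 := by
    ext i; simp [mulVec, dotProduct, one_apply]
  rw [hM, sub_mulVec, smul_mulVec, hdr.1, hJ]
  ext i; simp only [Pi.sub_apply, Pi.smul_apply, smul_eq_mul, Pi.zero_apply]; ring

lemma sub_transpose_mul_transpose (hsum : A + Aᵀ = of (fun _ _ => 1) - 1)
    (hdr : IsDoublyRegular A) :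
    (A - Aᵀ) * (A - Aᵀ)ᵀ = (n : ℝ) • 1 - of (fun _ _ => 1) := by
  obtain ⟨hrow, hAAT⟩ := hdr
  set J : Matrix (Fin n) (Fin n) ℝ := of fun _ _ => 1
  have hAJ : A * J = (((n : ℝ) - 1) / 2) • J := by
    ext i j
    simpa [J, mul_apply, mulVec, dotProduct] using congrFun hrow i
  have hJT : Jᵀ = J := by ext; rfl
  have hJAT : J * Aᵀ = (((n : ℝ) - 1) / 2) • J := by
    rw [← hJT, ← transpose_mul, hAJ, transpose_smul, hJT]
  have hJJ : J * J = (n : ℝ) • J := by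
    ext; simp [J, mul_apply]
  have hM : A - Aᵀ = (2 : ℝ) • A - (J - 1) := by rw [← hsum]; module
  rw [hM, transpose_sub, transpose_smul, transpose_sub, transpose_one, hJT]
  simp only [sub_mul, mul_sub, smul_mul_assoc, mul_smul_comm, mul_one, one_mul, hAAT, hAJ, hJAT,
    hJJ]
  linear_combination (norm := module) (2 : ℝ) • hsum

end IsDoublyRegular

theorem deleted_vertex_seidel_spectrum {k : ℕ}
    (A : Matrix (Fin (4 * k + 3)) (Fin (4 * k + 3)) ℝ)
    (hA : IsTournament A) (hdr : IsDoublyRegular A)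
    (x : Fin (4 * k + 3))
    (A₁ : Matrix (Fin (4 * k + 2)) (Fin (4 * k + 2)) ℝ)
    (hA₁ : A₁ = A.submatrix (fun i => x.succAbove i) (fun i => x.succAbove i)) :
    (Seidel A₁).charpoly.rootMultiplicity (Real.sqrt (4 * k + 3) : ℂ) = 2 * k ∧
    (Seidel A₁).charpoly.rootMultiplicity 1 = 1 ∧
    (Seidel A₁).charpoly.rootMultiplicity (-1) = 1 ∧
    (Seidel A₁).charpoly.rootMultiplicity (-(Real.sqrt (4 * k + 3) : ℂ)) = 2 * k := by
  have hskew : (A - Aᵀ)ᵀ = -(A - Aᵀ) := by simp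
  have hrow := IsDoublyRegular.sub_transpose_mulVec_one hA.2.2 hdr
  have hMM : (A - Aᵀ) * (A - Aᵀ)ᵀ = (((4 * k + 2 : ℕ) : ℝ) + 1) • 1 - of fun _ _ => 1 := by
    rw [IsDoublyRegular.sub_transpose_mul_transpose hA.2.2 hdr]; push_cast; ring_nf
  have hsub : A₁ - A₁ᵀ = (A - Aᵀ).submatrix x.succAbove x.succAbove := by
    rw [hA₁]; rfl
  have hann := seidel_mul_seidel_quadratic A₁
    (hsub ▸ submatrix_succAbove_gram_quadratic x hskew hMM hrow)
  have htr : (Seidel A₁ * Seidel A₁).trace = ((4 * k + 2 : ℕ) : ℂ) * ((4 * k + 2 : ℕ) - 1) := by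
    rw [trace_seidel_mul_seidel, hsub, trace_submatrix_succAbove_gram x hskew hMM]
    push_cast; ring
  obtain ⟨hs, h1, hm1, hneg⟩ :=
    (isHermitian_seidel A₁).rootMultiplicity_charpoly_of_transpose_eq_neg (Fintype.card_fin _)
      (by omega) (transpose_seidel A₁) hann htr
  have hn : ((4 * k + 2 : ℕ) : ℝ) + 1 = 4 * k + 3 := by push_cast; ring
  rw [hn, RCLike.ofReal_eq_complex_ofReal] at hs hneg
  rw [hneg]
  exact ⟨by omega, h1, hm1, by omega⟩
end
end

section
/- Let G be a doubly regular tournament of size n with adjacency matrix A, let x be a vertex, and write A in block form with first row (0, vᵀ) and first column (0, 𝟏-v), where A₁ is the remaining principal submatrix. Then the vector y = 𝟏 + (i-1)v is an eigenvector of the Seidel matrix S₁ = i(A₁ - A₁ᵀ) with eigenvalue 1, and its complex conjugate ȳ is an eigenvector of S₁ with eigenvalue -1. -/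
open Matrix Polynomial

noncomputable section

theorem deleted_vertex_eigenvector {m : ℕ}
    (A : Matrix (Fin (m + 1)) (Fin (m + 1)) ℝ)
    (hA : IsTournament A) (hdr : IsDoublyRegular A)
    (v : Fin m → ℝ) (hv : v = fun i => A 0 i.succ)
    (A₁ : Matrix (Fin m) (Fin m) ℝ)
    (hA₁ : A₁ = A.submatrix Fin.succ Fin.succ)
    (y : Fin m → ℂ) (hy : y = fun i => 1 + (Complex.I - 1) * (v i : ℂ)) :
    (Seidel A₁).mulVec y = (1 : ℂ) • y ∧
    (Seidel A₁).mulVec (fun i => (starRingEnd ℂ) (y i)) =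
      (-1 : ℂ) • fun i => (starRingEnd ℂ) (y i) := by
  subst hv hA₁ hy
  -- basic facts
  have hdiag : ∀ i, A i i = 0 := hA.2.1
  have hskew : ∀ i j, A i j + A j i = 1 - (if i = j then (1:ℝ) else 0) := by
    intro i j
    have := congrFun (congrFun hA.2.2 i) j
    simpa [Matrix.add_apply, Matrix.transpose_apply, Matrix.sub_apply,
      Matrix.one_apply] using this
  have hrow : ∀ i : Fin (m+1), ∑ j, A i j = (m:ℝ)/2 := by
    intro i
    have := congrFun hdr.1 i
    simp only [Matrix.mulVec, dotProduct, mul_one] at this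
    rw [this]; push_cast; ring
  have hrowsub : ∀ i : Fin (m+1), ∑ j : Fin m, A i j.succ = (m:ℝ)/2 - A i 0 := by
    intro i
    have h := hrow i
    rw [Fin.sum_univ_succ] at h
    linarith
  have hfirstcol : ∀ i : Fin m, A i.succ 0 = 1 - A 0 i.succ := by
    intro i
    have := hskew i.succ 0
    simp [Fin.succ_ne_zero i] at this
    linarith
  have hdot : ∀ i : Fin m, ∑ k, A i.succ k * A 0 k = ((m:ℝ)+1-3)/4 := by
    intro i
    have := congrFun (congrFun hdr.2 i.succ) 0
    simp only [Matrix.mul_apply, Matrix.transpose_apply, Matrix.add_apply,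
      Matrix.smul_apply, Matrix.one_apply, Matrix.of_apply, smul_eq_mul,
      Fin.succ_ne_zero i, if_false, mul_zero, mul_one, zero_add] at this
    rw [this]; push_cast; ring
  -- sum of v
  have hsumv : ∑ j : Fin m, A 0 j.succ = (m:ℝ)/2 := by
    rw [hrowsub 0, hdiag 0]; ring
  -- row sums of A₁
  have e1 : ∀ i : Fin m, ∑ j : Fin m, A i.succ j.succ = (m:ℝ)/2 - 1 + A 0 i.succ := by
    intro i; rw [hrowsub i.succ, hfirstcol i]; ring
  -- column sums of A₁
  have e2 : ∀ i : Fin m, ∑ j : Fin m, A j.succ i.succ = (m:ℝ)/2 - A 0 i.succ := by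
    intro i
    have step : ∀ j : Fin m, A j.succ i.succ
        = (1 - (if i = j then (1:ℝ) else 0)) - A i.succ j.succ := by
      intro j
      have := hskew i.succ j.succ
      simp only [Fin.succ_inj] at this
      linarith
    rw [Finset.sum_congr rfl fun j _ => step j, Finset.sum_sub_distrib,
      Finset.sum_sub_distrib, Finset.sum_const, Finset.sum_ite_eq, e1 i]
    rcases Nat.eq_zero_or_pos m with hm | hm
    · exact absurd i.2 (by omega)
    · simp [Finset.mem_univ]
      push_cast; ring
  have h1 : ∀ i : Fin m, ∑ j : Fin m, (A i.succ j.succ - A j.succ i.succ)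
      = 2 * A 0 i.succ - 1 := by
    intro i
    rw [Finset.sum_sub_distrib, e1 i, e2 i]; ring
  -- weighted sums against v
  have f1 : ∀ i : Fin m, ∑ j : Fin m, A i.succ j.succ * A 0 j.succ = ((m:ℝ)-2)/4 := by
    intro i
    have h := hdot i
    rw [Fin.sum_univ_succ, hdiag 0, mul_zero, zero_add] at h
    rw [h]; ring
  have f2 : ∀ i : Fin m, ∑ j : Fin m, A j.succ i.succ * A 0 j.succ
      = (m:ℝ)/2 - A 0 i.succ - ((m:ℝ)-2)/4 := by
    intro i
    have step : ∀ j : Fin m, A j.succ i.succ * A 0 j.succ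
        = (1 - (if i = j then (1:ℝ) else 0)) * A 0 j.succ
          - A i.succ j.succ * A 0 j.succ := by
      intro j
      have := hskew i.succ j.succ
      simp only [Fin.succ_inj] at this
      have h' : A j.succ i.succ = (1 - if i = j then (1:ℝ) else 0) - A i.succ j.succ := by
        linarith
      rw [h']; ring
    rw [Finset.sum_congr rfl fun j _ => step j, Finset.sum_sub_distrib, f1 i]
    have : ∑ j : Fin m, (1 - (if i = j then (1:ℝ) else 0)) * A 0 j.succ
        = (∑ j : Fin m, A 0 j.succ) - A 0 i.succ := by
      rw [Finset.sum_congr rfl (fun j _ => by ring_nf :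
        ∀ j ∈ Finset.univ, (1 - (if i = j then (1:ℝ) else 0)) * A 0 j.succ
          = A 0 j.succ - (if i = j then (1:ℝ) else 0) * A 0 j.succ),
        Finset.sum_sub_distrib]
      congr 1
      simp [ite_mul]
    rw [this, hsumv]
  have h2 : ∀ i : Fin m, ∑ j : Fin m,
      (A i.succ j.succ - A j.succ i.succ) * A 0 j.succ = A 0 i.succ - 1 := by
    intro i
    have : ∀ j : Fin m, (A i.succ j.succ - A j.succ i.succ) * A 0 j.succ
        = A i.succ j.succ * A 0 j.succ - A j.succ i.succ * A 0 j.succ := by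
      intro j; ring
    rw [Finset.sum_congr rfl fun j _ => this j, Finset.sum_sub_distrib, f1 i, f2 i]
    ring
  -- complex computation
  have key : ∀ (a b : ℂ), (∀ t : ℝ, Complex.I * (2*t - 1) + Complex.I * a * (t - 1)
        = b * (1 + a * t)) →
      (Seidel (A.submatrix Fin.succ Fin.succ)).mulVec
        (fun i : Fin m => 1 + a * ((A 0 i.succ : ℝ) : ℂ))
      = b • fun i : Fin m => 1 + a * ((A 0 i.succ : ℝ) : ℂ) := by
    intro a b hab
    funext i
    simp only [Seidel, Matrix.mulVec, dotProduct, Matrix.smul_apply,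
      Matrix.map_apply, Matrix.sub_apply, Matrix.transpose_apply,
      Matrix.submatrix_apply, smul_eq_mul, Pi.smul_apply]
    have expand : ∀ j : Fin m,
        Complex.I * ((A i.succ j.succ - A j.succ i.succ : ℝ) : ℂ)
          * (1 + a * ((A 0 j.succ : ℝ) : ℂ))
        = Complex.I * ((A i.succ j.succ - A j.succ i.succ : ℝ) : ℂ)
          + Complex.I * a * (((A i.succ j.succ - A j.succ i.succ)
              * A 0 j.succ : ℝ) : ℂ) := by
      intro j; push_cast; ring
    calc ∑ j : Fin m, Complex.I * ((A i.succ j.succ - A j.succ i.succ : ℝ) : ℂ)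
          * (1 + a * ((A 0 j.succ : ℝ) : ℂ))
        = ∑ j : Fin m, (Complex.I * ((A i.succ j.succ - A j.succ i.succ : ℝ) : ℂ)
            + Complex.I * a * (((A i.succ j.succ - A j.succ i.succ)
                * A 0 j.succ : ℝ) : ℂ)) :=
          Finset.sum_congr rfl fun j _ => expand j
      _ = Complex.I * ((∑ j : Fin m, (A i.succ j.succ - A j.succ i.succ) : ℝ) : ℂ)
            + Complex.I * a * ((∑ j : Fin m, (A i.succ j.succ - A j.succ i.succ)
                * A 0 j.succ : ℝ) : ℂ) := by
          rw [Finset.sum_add_distrib, ← Finset.mul_sum, ← Finset.mul_sum,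
            Complex.ofReal_sum, Complex.ofReal_sum]
      _ = Complex.I * ((2 * A 0 i.succ - 1 : ℝ) : ℂ)
            + Complex.I * a * ((A 0 i.succ - 1 : ℝ) : ℂ) := by
          rw [h1 i, h2 i]
      _ = b * (1 + a * ((A 0 i.succ : ℝ) : ℂ)) := by
          push_cast
          exact hab (A 0 i.succ)
  constructor
  · exact key (Complex.I - 1) 1 (fun t => by
      linear_combination ((t:ℂ) - 1) * Complex.I_sq)
  · have hconj : (fun i : Fin m => (starRingEnd ℂ) (1 + (Complex.I - 1) * ((A 0 i.succ : ℝ) : ℂ)))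
        = fun i : Fin m => 1 + (-Complex.I - 1) * ((A 0 i.succ : ℝ) : ℂ) := by
      funext i
      simp [Complex.conj_ofReal]
    rw [hconj]
    exact key (-Complex.I - 1) (-1) (fun t => by
      linear_combination (1 - (t:ℂ)) * Complex.I_sq)
end
end
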